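/- arXiv:2301.13326 — 2 statements merged into one kernel-verified Lean document; each statement's English description precedes it below -/
import Mathlib

section
/- Let f be monotone submodular with f(∅)=0, f̂ a surrogate with |f(S)-f̂(S)| ≤ ε for all S, k ≥ 1, and ε' ∈ (0,1). Suppose sets S_0 = ∅ ⊆ S_1 ⊆ ... ⊆ S_k with |S_i| = i are built so that at each step the added element a_{i+1} satisfies: f̂(a_{i+1}|S_i) ≥ w_i and f̂(e|S_i) ≤ w_i/(1-ε') for all e ∈ OPT \ S_i, for some threshold w_i (the ThresholdGreedy invariant). Then each step satisfies f(S_{i+1}) - f(S_i) ≥ ((1-ε')/k)(f(OPT) - f(S_i)) - 2(2-ε')ε, where OPT is any set of cardinality at most k. -/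
lemma sum_marg {Ω : Type*} [DecidableEq Ω]
    (f : Finset Ω → ℝ)
    (hsub : ∀ A B : Finset Ω, A ⊆ B → ∀ e ∉ B,
      f (insert e B) - f B ≤ f (insert e A) - f A) :
    ∀ (T S : Finset Ω), f (S ∪ T) - f S ≤ ∑ e ∈ T \ S, (f (insert e S) - f S) := by
  intro T
  induction T using Finset.induction_on with
  | empty => intro S; simp
  | @insert x T' hx ih =>
    intro S
    by_cases hxS : x ∈ S
    · have h1 : S ∪ insert x T' = S ∪ T' := by
        rw [Finset.union_insert, Finset.insert_eq_self.mpr (Finset.mem_union_left _ hxS)]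
      have h2 : insert x T' \ S = T' \ S := Finset.insert_sdiff_of_mem _ hxS
      rw [h1, h2]; exact ih S
    · have hxU : x ∉ S ∪ T' := by simp [hxS, hx]
      have h1 : S ∪ insert x T' = insert x (S ∪ T') := Finset.union_insert ..
      have h2 : insert x T' \ S = insert x (T' \ S) :=
        Finset.insert_sdiff_of_notMem _ hxS
      have hx2 : x ∉ T' \ S := by simp [hx]
      rw [h1, h2, Finset.sum_insert hx2]
      have hmarg := hsub S (S ∪ T') Finset.subset_union_left x hxU
      have := ih S
      linarith

theorem stmt_11 {Ω : Type*} [DecidableEq Ω] [Fintype Ω]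
    (f fhat : Finset Ω → ℝ)
    (hmono : ∀ A B : Finset Ω, A ⊆ B → f A ≤ f B)
    (hsub : ∀ A B : Finset Ω, A ⊆ B → ∀ e ∉ B,
      f (insert e B) - f B ≤ f (insert e A) - f A)
    (hempty : f ∅ = 0)
    (ε : ℝ) (hε : 0 < ε) (herr : ∀ S : Finset Ω, |f S - fhat S| ≤ ε)
    (k : ℕ) (hk : 1 ≤ k) (ε' : ℝ) (hε' : ε' ∈ Set.Ioo (0:ℝ) 1)
    (OPT : Finset Ω) (hOPT : OPT.card ≤ k)
    (S : ℕ → Finset Ω) (a : ℕ → Ω) (w : ℕ → ℝ)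
    (hS0 : S 0 = ∅)
    (hstep : ∀ i < k, a (i+1) ∉ S i ∧ S (i+1) = insert (a (i+1)) (S i))
    (hthresh : ∀ i < k,
      w i ≤ fhat (insert (a (i+1)) (S i)) - fhat (S i) ∧
      ∀ e ∈ OPT \ S i, fhat (insert e (S i)) - fhat (S i) ≤ w i / (1 - ε')) :
    ∀ i < k,
      ((1 - ε') / k) * (f OPT - f (S i)) - 2 * (2 - ε') * ε
        ≤ f (S (i+1)) - f (S i) := by
  intro i hi
  obtain ⟨hai, hSi1⟩ := hstep i hi
  obtain ⟨hw1, hw2⟩ := hthresh i hi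
  obtain ⟨hε'0, hε'1⟩ := hε'
  have hkpos : (0:ℝ) < k := by exact_mod_cast Nat.lt_of_lt_of_le Nat.zero_lt_one hk
  have herr2 : ∀ A B : Finset Ω, f A - f B ≤ fhat A - fhat B + 2*ε := by
    intro A B
    have h1 := abs_le.mp (herr A); have h2 := abs_le.mp (herr B)
    linarith [h1.1, h1.2, h2.1, h2.2]
  have hgain : fhat (S (i+1)) - fhat (S i) - 2*ε ≤ f (S (i+1)) - f (S i) := by
    linarith [herr2 (S i) (S (i+1))]
  have hmonogain : 0 ≤ f (S (i+1)) - f (S i) := by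
    rw [hSi1]
    linarith [hmono (S i) (insert (a (i+1)) (S i)) (Finset.subset_insert _ _)]
  by_cases hcase : f OPT - f (S i) ≤ 0
  · have h0 : ((1-ε')/k) * (f OPT - f (S i)) ≤ 0 :=
      mul_nonpos_of_nonneg_of_nonpos (div_nonneg (by linarith) hkpos.le) hcase
    nlinarith
  · push_neg at hcase
    have hne : (OPT \ S i).Nonempty := by
      rw [Finset.sdiff_nonempty]
      intro hsub'
      exact absurd (hmono _ _ hsub') (by linarith)
    set m := (OPT \ S i).card with hm
    have hm1 : 1 ≤ m := Finset.card_pos.mpr hne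
    have hmk : m ≤ k := le_trans (Finset.card_le_card Finset.sdiff_subset) hOPT
    have hsum : f (S i ∪ OPT) - f (S i) ≤ ∑ e ∈ OPT \ S i, (f (insert e (S i)) - f (S i)) :=
      sum_marg f hsub OPT (S i)
    have hsum2 : ∑ e ∈ OPT \ S i, (f (insert e (S i)) - f (S i))
        ≤ (m : ℝ) * (w i / (1-ε') + 2*ε) := by
      have := Finset.sum_le_card_nsmul (OPT \ S i)
        (fun e => f (insert e (S i)) - f (S i)) (w i / (1-ε') + 2*ε)
        (fun e he => by linarith [herr2 (insert e (S i)) (S i), hw2 e he])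
      rw [nsmul_eq_mul] at this
      exact this
    have hOPTle : f OPT ≤ f (S i ∪ OPT) := hmono _ _ Finset.subset_union_right
    have hv : 0 < w i / (1-ε') + 2*ε := by
      by_contra h; push_neg at h
      have hm0 : (0:ℝ) ≤ m := Nat.cast_nonneg _
      nlinarith
    have hk' : f OPT - f (S i) ≤ (k:ℝ) * (w i/(1-ε') + 2*ε) := by
      have hcast : (m:ℝ) ≤ (k:ℝ) := by exact_mod_cast hmk
      nlinarith
    have key : ((1-ε')/k) * (f OPT - f (S i)) ≤ w i + 2*ε*(1-ε') := by
      have h1 : ((1-ε')/k) * (f OPT - f (S i)) ≤ ((1-ε')/k) * ((k:ℝ) * (w i/(1-ε')+2*ε)) :=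
        mul_le_mul_of_nonneg_left hk' (div_nonneg (by linarith) hkpos.le)
      have hne1 : (1-ε') ≠ 0 := by linarith
      have h2 : ((1-ε')/k) * ((k:ℝ) * (w i/(1-ε')+2*ε)) = w i + 2*ε*(1-ε') := by
        field_simp
      linarith
    have hfh : w i - 2*ε ≤ f (S (i+1)) - f (S i) := by
      rw [hSi1] at hgain
      rw [hSi1]
      linarith
    linarith
end

section
/- Fix a real value V ≥ 0, budget B > 0, costs c_1, ..., c_ℓ > 0, constants K̃ ≥ 1, β ≥ 1 with c_i ≤ B for all i, and ε ≥ 0. Suppose a sequence F_0 = 0 and F_i - F_{i-1} ≥ (c_i/B)(V - F_{i-1}) - 2(1 + K̃·c_i/B)ε for i = 1, ..., ℓ, where additionally B/c_i ≤ β for each i. Then F_ℓ ≥ (1 - ∏_{j=1}^ℓ (1 - c_j/B))·V - 2(β + K̃)ε. -/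
theorem stmt_13 (V B ε Ktil β : ℝ) (hV : 0 ≤ V) (hB : 0 < B) (hε : 0 ≤ ε)
    (hK : 1 ≤ Ktil) (hβ : 1 ≤ β)
    (ℓ : ℕ) (c : ℕ → ℝ)
    (hc : ∀ i, 1 ≤ i → i ≤ ℓ → 0 < c i ∧ c i ≤ B ∧ B / c i ≤ β)
    (F : ℕ → ℝ) (hF0 : F 0 = 0)
    (hrec : ∀ i, 1 ≤ i → i ≤ ℓ →
      (c i / B) * (V - F (i-1)) - 2 * (1 + Ktil * c i / B) * ε ≤ F i - F (i-1)) :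
    (1 - ∏ j ∈ Finset.Icc 1 ℓ, (1 - c j / B)) * V - 2 * (β + Ktil) * ε ≤ F ℓ := by
  suffices h : ∀ n, n ≤ ℓ →
      (1 - ∏ j ∈ Finset.Icc 1 n, (1 - c j / B)) * V - 2 * (β + Ktil) * ε ≤ F n from
    h ℓ le_rfl
  intro n
  induction n with
  | zero =>
    intro _
    simp only [hF0, Finset.Icc_eq_empty_of_lt Nat.zero_lt_one, Finset.prod_empty]
    nlinarith
  | succ n ih =>
    intro hn
    have ih' := ih (le_trans (Nat.le_succ n) hn)
    obtain ⟨hcpos, hcB, hβc⟩ := hc (n+1) (Nat.succ_le_succ (Nat.zero_le n)) hn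
    have hrec' := hrec (n+1) (Nat.succ_le_succ (Nat.zero_le n)) hn
    simp only [Nat.add_sub_cancel] at hrec'
    rw [mul_div_assoc] at hrec'
    rw [Finset.prod_Icc_succ_top (Nat.succ_le_succ (Nat.zero_le n))]
    set t : ℝ := c (n+1) / B with ht
    have htpos : 0 < t := div_pos hcpos hB
    have ht1 : t ≤ 1 := div_le_one_of_le₀ hcB hB.le
    have hβt : 1 ≤ β * t := by
      rw [ht, mul_div_assoc', le_div_iff₀ hB, one_mul]
      calc B = B / c (n+1) * c (n+1) := by field_simp
        _ ≤ β * c (n+1) := mul_le_mul_of_nonneg_right hβc hcpos.le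
    set p : ℝ := ∏ j ∈ Finset.Icc 1 n, (1 - c j / B) with hp
    have key1 : 0 ≤ (1 - t) * (F n - ((1 - p) * V - 2 * (β + Ktil) * ε)) :=
      mul_nonneg (by linarith) (by linarith)
    have key2 : 0 ≤ (β * t - 1) * ε := mul_nonneg (by linarith) hε
    nlinarith [hrec', key1, key2, mul_nonneg hε (mul_nonneg htpos.le (by linarith : (0:ℝ) ≤ Ktil))]
end
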